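/- arXiv:1011.5870 — 2 statements merged into one kernel-verified Lean document; each statement's English description precedes it below -/
import Mathlib

section
/- Let A be an m×n (0,1)-matrix, let t be a positive integer, and let A' be obtained from A by a single interchange. Then ρ_t(A) − 1 ≤ ρ_t(A') ≤ ρ_t(A) + 1. -/
open scoped BigOperators

/-- The `t`-term rank of a matrix `A` with entries in `ℕ`: the largest number of 1s of `A`
(equivalently, the largest sum `σ(B)` over `(0,1)`-matrices `B ≤ A`) with at most one 1 in
each column and at most `t` 1s in each row. -/
noncomputable def tTermRank {α β : Type*} [Fintype α] [Fintype β] (t : ℕ)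
    (A : Matrix α β ℕ) : ℕ :=
  sSup {k : ℕ | ∃ B : Matrix α β ℕ,
    (∀ i j, B i j ≤ A i j) ∧ (∀ i, ∑ j, B i j ≤ t) ∧ (∀ j, ∑ i, B i j ≤ 1) ∧
    k = ∑ i, ∑ j, B i j}
/-- `A'` is obtained from `A` by a single interchange: a `2×2` submatrix of `A` equal to
`[[1,0],[0,1]]` or `[[0,1],[1,0]]` is replaced by the other, all other entries unchanged. -/
def Interchange {m n : ℕ} (A A' : Matrix (Fin m) (Fin n) ℕ) : Prop :=
  ∃ (i₁ i₂ : Fin m) (j₁ j₂ : Fin n), i₁ ≠ i₂ ∧ j₁ ≠ j₂ ∧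
    ((A i₁ j₁ = 1 ∧ A i₁ j₂ = 0 ∧ A i₂ j₁ = 0 ∧ A i₂ j₂ = 1) ∨
     (A i₁ j₁ = 0 ∧ A i₁ j₂ = 1 ∧ A i₂ j₁ = 1 ∧ A i₂ j₂ = 0)) ∧
    A' i₁ j₁ = A i₁ j₂ ∧ A' i₁ j₂ = A i₁ j₁ ∧ A' i₂ j₁ = A i₂ j₂ ∧ A' i₂ j₂ = A i₂ j₁ ∧
    (∀ i j, ¬((i = i₁ ∨ i = i₂) ∧ (j = j₁ ∨ j = j₂)) → A' i j = A i j)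

/-!
Let `B ≤ A` be a selection realising `ρ_t(A)` and let the interchange move the diagonal
`(i₁, j₁), (i₂, j₂)` of a `2 × 2` block onto its anti-diagonal. Clearing the diagonal of `B` and
putting `min (B i₁ j₁) (B i₂ j₂)` on the anti-diagonal (where `B` vanishes) gives a selection
under `A'`: no row or column sum grows, and only `|B i₁ j₁ - B i₂ j₂| ≤ 1` ones are lost.
So `ρ_t(A) ≤ ρ_t(A') + 1`, and the reverse bound holds because interchanges are symmetric.
-/

open Finset
open scoped Matrix

theorem Fintype.sum_le_sum_add_of_le_off_pair {ι M : Type*} [Fintype ι] [AddCommMonoid M]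
    [PartialOrder M] [IsOrderedAddMonoid M] {f g : ι → M} {a b : ι} (k : M) (hab : a ≠ b)
    (hoff : ∀ x, x ≠ a → x ≠ b → f x ≤ g x) (hpair : f a + f b ≤ g a + g b + k) :
    ∑ x, f x ≤ ∑ x, g x + k := by
  classical
  have hsplit (h : ι → M) : ∑ x, h x = ∑ x ∈ univ \ {a, b}, h x + (h a + h b) := by
    rw [← sum_pair hab, sum_sdiff (subset_univ _)]
  have hrest : ∑ x ∈ univ \ {a, b}, f x ≤ ∑ x ∈ univ \ {a, b}, g x :=
    sum_le_sum fun x hx => by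
      simp only [mem_sdiff, mem_univ, mem_insert, mem_singleton, true_and, not_or] at hx
      exact hoff x hx.1 hx.2
  rw [hsplit f, hsplit g, add_assoc]
  exact add_le_add hrest hpair

variable {α β : Type*}

section BlockSwap

variable [DecidableEq α] [DecidableEq β]

def blockSwap (B : Matrix α β ℕ) (i₁ i₂ : α) (j₁ j₂ : β) : Matrix α β ℕ := fun i j =>
  if i = i₁ ∧ j = j₁ ∨ i = i₂ ∧ j = j₂ then 0
  else if i = i₁ ∧ j = j₂ ∨ i = i₂ ∧ j = j₁ then min (B i₁ j₁) (B i₂ j₂)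
  else B i j

theorem transpose_blockSwap (B : Matrix α β ℕ) (i₁ i₂ : α) (j₁ j₂ : β) :
    (blockSwap B i₁ i₂ j₁ j₂)ᵀ = blockSwap Bᵀ j₁ j₂ i₁ i₂ := by
  ext j i
  simp only [blockSwap, Matrix.transpose_apply, and_comm (a := j = _),
    or_comm (a := i = i₁ ∧ j = j₂)]

theorem blockSwap_apply_of_not_mem (B : Matrix α β ℕ) {i₁ i₂ : α} {j₁ j₂ : β} {i : α} {j : β}
    (h : ¬((i = i₁ ∨ i = i₂) ∧ (j = j₁ ∨ j = j₂))) : blockSwap B i₁ i₂ j₁ j₂ i j = B i j := by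
  unfold blockSwap
  rw [if_neg (by tauto), if_neg (by tauto)]

theorem blockSwap_apply_block (B : Matrix α β ℕ) {i₁ i₂ : α} {j₁ j₂ : β} (hi : i₁ ≠ i₂)
    (hj : j₁ ≠ j₂) :
    blockSwap B i₁ i₂ j₁ j₂ i₁ j₁ = 0 ∧ blockSwap B i₁ i₂ j₁ j₂ i₂ j₂ = 0 ∧
      blockSwap B i₁ i₂ j₁ j₂ i₁ j₂ = min (B i₁ j₁) (B i₂ j₂) ∧
      blockSwap B i₁ i₂ j₁ j₂ i₂ j₁ = min (B i₁ j₁) (B i₂ j₂) := by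
  simp [blockSwap, hi, hj, hi.symm, hj.symm]

theorem sum_blockSwap_row_le [Fintype β] (B : Matrix α β ℕ) {i₁ i₂ : α} {j₁ j₂ : β}
    (hi : i₁ ≠ i₂) (hj : j₁ ≠ j₂) (h₁₂ : B i₁ j₂ = 0) (h₂₁ : B i₂ j₁ = 0) (i : α) :
    ∑ j, blockSwap B i₁ i₂ j₁ j₂ i j ≤ ∑ j, B i j := by
  have hblock := blockSwap_apply_block B hi hj
  refine add_zero (∑ j, B i j) ▸ Fintype.sum_le_sum_add_of_le_off_pair 0 hj
    (fun j h₁ h₂ => (blockSwap_apply_of_not_mem B (by tauto)).le) ?_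
  obtain rfl | hi₁ := eq_or_ne i i₁
  · omega
  obtain rfl | hi₂ := eq_or_ne i i₂
  · omega
  rw [blockSwap_apply_of_not_mem B (by tauto), blockSwap_apply_of_not_mem B (by tauto), add_zero]

theorem sum_blockSwap_col_le [Fintype α] (B : Matrix α β ℕ) {i₁ i₂ : α} {j₁ j₂ : β}
    (hi : i₁ ≠ i₂) (hj : j₁ ≠ j₂) (h₁₂ : B i₁ j₂ = 0) (h₂₁ : B i₂ j₁ = 0) (j : β) :
    ∑ i, blockSwap B i₁ i₂ j₁ j₂ i j ≤ ∑ i, B i j := by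
  have := sum_blockSwap_row_le Bᵀ hj hi h₂₁ h₁₂ j
  rwa [← transpose_blockSwap] at this

theorem sum_sum_le_sum_sum_blockSwap_add_one [Fintype α] [Fintype β] (B : Matrix α β ℕ)
    {i₁ i₂ : α} {j₁ j₂ : β} (hi : i₁ ≠ i₂) (hj : j₁ ≠ j₂) (h₁₂ : B i₁ j₂ = 0)
    (h₂₁ : B i₂ j₁ = 0) (h₁₁ : B i₁ j₁ ≤ 1) (h₂₂ : B i₂ j₂ ≤ 1) :
    ∑ i, ∑ j, B i j ≤ ∑ i, ∑ j, blockSwap B i₁ i₂ j₁ j₂ i j + 1 := by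
  have hblock := blockSwap_apply_block B hi hj
  have hrow₁ : ∑ j, B i₁ j ≤ ∑ j, blockSwap B i₁ i₂ j₁ j₂ i₁ j + (B i₁ j₁ - B i₂ j₂) :=
    Fintype.sum_le_sum_add_of_le_off_pair _ hj
      (fun j h₁ h₂ => (blockSwap_apply_of_not_mem B (by tauto)).ge) (by omega)
  have hrow₂ : ∑ j, B i₂ j ≤ ∑ j, blockSwap B i₁ i₂ j₁ j₂ i₂ j + (B i₂ j₂ - B i₁ j₁) :=
    Fintype.sum_le_sum_add_of_le_off_pair _ hj
      (fun j h₁ h₂ => (blockSwap_apply_of_not_mem B (by tauto)).ge) (by omega)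
  exact Fintype.sum_le_sum_add_of_le_off_pair _ hi
    (fun i h₁ h₂ => (sum_congr rfl fun j _ => blockSwap_apply_of_not_mem B (by tauto)).ge)
    (by omega)

end BlockSwap

section TTermSelection

variable [Fintype α] [Fintype β]

def IsTTermSelection (t : ℕ) (A B : Matrix α β ℕ) : Prop :=
  (∀ i j, B i j ≤ A i j) ∧ (∀ i, ∑ j, B i j ≤ t) ∧ (∀ j, ∑ i, B i j ≤ 1)

theorem bddAbove_tTermRank_set (t : ℕ) (A : Matrix α β ℕ) :
    BddAbove {k : ℕ | ∃ B : Matrix α β ℕ,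
      (∀ i j, B i j ≤ A i j) ∧ (∀ i, ∑ j, B i j ≤ t) ∧ (∀ j, ∑ i, B i j ≤ 1) ∧
      k = ∑ i, ∑ j, B i j} := by
  refine ⟨Fintype.card β, ?_⟩
  rintro k ⟨B, -, -, hcol, rfl⟩
  calc ∑ i, ∑ j, B i j = ∑ j, ∑ i, B i j := sum_comm
    _ ≤ ∑ _j : β, 1 := sum_le_sum fun j _ => hcol j
    _ = Fintype.card β := by simp

theorem IsTTermSelection.sum_le_tTermRank {t : ℕ} {A B : Matrix α β ℕ}
    (hB : IsTTermSelection t A B) : ∑ i, ∑ j, B i j ≤ tTermRank t A :=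
  le_csSup (bddAbove_tTermRank_set t A) ⟨B, hB.1, hB.2.1, hB.2.2, rfl⟩

theorem exists_isTTermSelection_sum_eq_tTermRank (t : ℕ) (A : Matrix α β ℕ) :
    ∃ B, IsTTermSelection t A B ∧ ∑ i, ∑ j, B i j = tTermRank t A := by
  have hne : {k : ℕ | ∃ B : Matrix α β ℕ,
      (∀ i j, B i j ≤ A i j) ∧ (∀ i, ∑ j, B i j ≤ t) ∧ (∀ j, ∑ i, B i j ≤ 1) ∧
      k = ∑ i, ∑ j, B i j}.Nonempty :=
    ⟨0, 0, fun _ _ => Nat.zero_le _, fun _ => by simp, fun _ => by simp, by simp⟩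
  obtain ⟨B, hBA, hrow, hcol, hk⟩ := Nat.sSup_mem hne (bddAbove_tTermRank_set t A)
  exact ⟨B, ⟨hBA, hrow, hcol⟩, hk.symm⟩

theorem IsTTermSelection.apply_le_one {t : ℕ} {A B : Matrix α β ℕ}
    (hB : IsTTermSelection t A B) (i : α) (j : β) : B i j ≤ 1 :=
  (single_le_sum (f := (B · j)) (fun _ _ => Nat.zero_le _) (mem_univ i)).trans (hB.2.2 j)

theorem IsTTermSelection.apply_eq_zero {t : ℕ} {A B : Matrix α β ℕ}
    (hB : IsTTermSelection t A B) {i : α} {j : β} (h : A i j = 0) : B i j = 0 :=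
  Nat.le_zero.mp (h ▸ hB.1 i j)

variable [DecidableEq α] [DecidableEq β]

theorem IsTTermSelection.blockSwap {t : ℕ} {A A' B : Matrix α β ℕ} (hB : IsTTermSelection t A B)
    {i₁ i₂ : α} {j₁ j₂ : β} (hi : i₁ ≠ i₂) (hj : j₁ ≠ j₂) (h₁₂ : A i₁ j₂ = 0)
    (h₂₁ : A i₂ j₁ = 0) (h'₁₂ : A' i₁ j₂ = A i₁ j₁) (h'₂₁ : A' i₂ j₁ = A i₂ j₂)
    (hoff : ∀ i j, ¬((i = i₁ ∨ i = i₂) ∧ (j = j₁ ∨ j = j₂)) → A' i j = A i j) :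
    IsTTermSelection t A' (blockSwap B i₁ i₂ j₁ j₂) := by
  have hB₁₂ := hB.apply_eq_zero h₁₂
  have hB₂₁ := hB.apply_eq_zero h₂₁
  refine ⟨fun i j => ?_, fun i => (sum_blockSwap_row_le B hi hj hB₁₂ hB₂₁ i).trans (hB.2.1 i),
    fun j => (sum_blockSwap_col_le B hi hj hB₁₂ hB₂₁ j).trans (hB.2.2 j)⟩
  by_cases hij : (i = i₁ ∨ i = i₂) ∧ (j = j₁ ∨ j = j₂)
  · have := hB.1 i₁ j₁
    have := hB.1 i₂ j₂
    have := blockSwap_apply_block B hi hj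
    obtain ⟨rfl | rfl, rfl | rfl⟩ := hij <;> omega
  · rw [blockSwap_apply_of_not_mem B hij, hoff i j hij]
    exact hB.1 i j

theorem tTermRank_le_tTermRank_add_one_of_antidiagonal_swap {t : ℕ} {A A' : Matrix α β ℕ}
    {i₁ i₂ : α} {j₁ j₂ : β} (hi : i₁ ≠ i₂) (hj : j₁ ≠ j₂) (h₁₂ : A i₁ j₂ = 0)
    (h₂₁ : A i₂ j₁ = 0) (h'₁₂ : A' i₁ j₂ = A i₁ j₁) (h'₂₁ : A' i₂ j₁ = A i₂ j₂)
    (hoff : ∀ i j, ¬((i = i₁ ∨ i = i₂) ∧ (j = j₁ ∨ j = j₂)) → A' i j = A i j) :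
    tTermRank t A ≤ tTermRank t A' + 1 := by
  obtain ⟨B, hB, hsum⟩ := exists_isTTermSelection_sum_eq_tTermRank t A
  calc tTermRank t A = ∑ i, ∑ j, B i j := hsum.symm
    _ ≤ ∑ i, ∑ j, blockSwap B i₁ i₂ j₁ j₂ i j + 1 :=
      sum_sum_le_sum_sum_blockSwap_add_one B hi hj (hB.apply_eq_zero h₁₂)
        (hB.apply_eq_zero h₂₁) (hB.apply_le_one _ _) (hB.apply_le_one _ _)
    _ ≤ tTermRank t A' + 1 := by
      gcongr
      exact (hB.blockSwap hi hj h₁₂ h₂₁ h'₁₂ h'₂₁ hoff).sum_le_tTermRank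

end TTermSelection

theorem Interchange.symm {m n : ℕ} {A A' : Matrix (Fin m) (Fin n) ℕ} (h : Interchange A A') :
    Interchange A' A := by
  obtain ⟨i₁, i₂, j₁, j₂, hi, hj, hA, e₁₁, e₁₂, e₂₁, e₂₂, hoff⟩ := h
  exact ⟨i₁, i₂, j₁, j₂, hi, hj, by omega, by omega, by omega, by omega, by omega,
    fun i j hij => (hoff i j hij).symm⟩

theorem Interchange.tTermRank_le_add_one {m n : ℕ} {A A' : Matrix (Fin m) (Fin n) ℕ}
    (h : Interchange A A') (t : ℕ) : tTermRank t A ≤ tTermRank t A' + 1 := by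
  obtain ⟨i₁, i₂, j₁, j₂, hi, hj, hA | hA, e₁₁, e₁₂, e₂₁, e₂₂, hoff⟩ := h
  · exact tTermRank_le_tTermRank_add_one_of_antidiagonal_swap hi hj hA.2.1 hA.2.2.1 e₁₂ e₂₁
      hoff
  · exact tTermRank_le_tTermRank_add_one_of_antidiagonal_swap hi hj.symm hA.1 hA.2.2.2 e₁₁ e₂₂
      fun i j hij => hoff i j (by tauto)

theorem t_term_rank_interchange_general (m n t : ℕ)
    (A A' : Matrix (Fin m) (Fin n) ℕ)
    (h : Interchange A A') :
    tTermRank t A - 1 ≤ tTermRank t A' ∧ tTermRank t A' ≤ tTermRank t A + 1 := by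
  have := h.tTermRank_le_add_one t
  have := h.symm.tTermRank_le_add_one t
  omega

/-- A single interchange changes the `t`-term rank by at most 1. -/
theorem t_term_rank_interchange (m n t : ℕ) (ht : 0 < t)
    (A A' : Matrix (Fin m) (Fin n) ℕ) (hA : ∀ i j, A i j ≤ 1)
    (h : Interchange A A') :
    tTermRank t A - 1 ≤ tTermRank t A' ∧ tTermRank t A' ≤ tTermRank t A + 1 :=
  t_term_rank_interchange_general m n t A A' h
end

section
/- Let A be an m×n (0,1)-matrix, let t ≥ 2 be an integer, and let A' be obtained from A by a single interchange. If ρ_{t−1}(A') = ρ_{t−1}(A) + 1, then ρ_t(A) ≤ ρ_t(A') ≤ ρ_t(A) + 1; in particular, an interchange which increases the (t−1)-term rank cannot decrease the t-term rank. -/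
/-!
Both bounds rest on the König–Egerváry duality `ρ_t(A) = min (t * #R + #C)` over pairs of a row
set `R` and a column set `C` covering the support of `A`; the hard inequality comes from Hall's
theorem applied to `t` copies of every row together with enough dummy rows to absorb the
deficiency.

An interchange moves the support from `(i₁, j₁), (i₂, j₂)` to `(i₁, j₂), (i₂, j₁)`, and one
extra column turns a cover of `A` into one of `A'`; this is the upper bound. For the lower
bound put `s = t - 1` and suppose `ρ_t(A') < ρ_t(A)`. Take an optimal `t`-cover `(R, C)` of `A'`
and an optimal `s`-cover `(R', C')` of `A`. Neither survives the interchange, which forces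
each to meet the `2 × 2` block in one row and one column. Then, up to a single extra column,
`(R ∩ R', C ∪ C')` is a `t`-cover of `A` and `(R ∪ R', C ∩ C')` an `s`-cover of `A'`, while
`t * #(R ∩ R') + s * #(R ∪ R') ≤ t * #R + s * #R'`. Hence
`ρ_t(A) + ρ_s(A') ≤ ρ_t(A') + ρ_s(A) + 1`, against the two strict increases.
-/

open scoped BigOperators

open Finset

section Duality

variable {α β : Type*}

def IsTermMatching [Fintype α] [Fintype β] (t : ℕ) (A B : Matrix α β ℕ) : Prop :=
  (∀ i j, B i j ≤ A i j) ∧ (∀ i, ∑ j, B i j ≤ t) ∧ (∀ j, ∑ i, B i j ≤ 1)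

def IsLineCover (A : Matrix α β ℕ) (R : Finset α) (C : Finset β) : Prop :=
  ∀ i j, A i j ≠ 0 → i ∈ R ∨ j ∈ C

variable [Fintype α] [Fintype β] {t : ℕ} {A B : Matrix α β ℕ} {R : Finset α} {C : Finset β}

theorem IsTermMatching.sum_le_of_isLineCover (hB : IsTermMatching t A B)
    (hc : IsLineCover A R C) : ∑ i, ∑ j, B i j ≤ t * #R + #C := by
  classical
  obtain ⟨hBA, hrow, hcol⟩ := hB
  have hsplit : ∀ i j, B i j ≤ (if i ∈ R then B i j else 0) + (if j ∈ C then B i j else 0) := by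
    intro i j
    rcases Nat.eq_zero_or_pos (B i j) with h0 | hpos
    · omega
    · rcases hc i j (by have := hBA i j; omega) with hi | hj <;> simp [*]
  calc ∑ i, ∑ j, B i j
      ≤ ∑ i, ∑ j, ((if i ∈ R then B i j else 0) + (if j ∈ C then B i j else 0)) :=
        sum_le_sum fun i _ => sum_le_sum fun j _ => hsplit i j
    _ = ∑ i ∈ R, ∑ j, B i j + ∑ j ∈ C, ∑ i, B i j := by
        rw [sum_comm (s := C)]
        simp [sum_add_distrib, sum_ite_mem, sum_ite_irrel]
    _ ≤ ∑ _i ∈ R, t + ∑ _j ∈ C, 1 :=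
        add_le_add (sum_le_sum fun i _ => hrow i) (sum_le_sum fun j _ => hcol j)
    _ = t * #R + #C := by simp [mul_comm]

theorem le_tTermRank (hB : IsTermMatching t A B) : ∑ i, ∑ j, B i j ≤ tTermRank t A := by
  refine le_csSup ⟨Fintype.card β, ?_⟩ ⟨B, hB.1, hB.2.1, hB.2.2, rfl⟩
  rintro _ ⟨B', h₁, h₂, h₃, rfl⟩
  simpa using (show IsTermMatching t A B' from ⟨h₁, h₂, h₃⟩).sum_le_of_isLineCover
    (R := ∅) (C := univ) fun _ j _ => Or.inr (mem_univ j)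

theorem tTermRank_le_of_isLineCover (hc : IsLineCover A R C) : tTermRank t A ≤ t * #R + #C := by
  refine csSup_le ⟨0, 0, fun _ _ => Nat.zero_le _, by simp, by simp, by simp⟩ ?_
  rintro _ ⟨B, h₁, h₂, h₃, rfl⟩
  exact IsTermMatching.sum_le_of_isLineCover ⟨h₁, h₂, h₃⟩ hc

end Duality

theorem Finset.exists_injective_sum_of_card_le_card_biUnion_add {ι γ : Type*} [DecidableEq γ]
    (t : ι → Finset γ) (d : ℕ) (h : ∀ K : Finset ι, #K ≤ #(K.biUnion t) + d) :
    ∃ f : ι → γ ⊕ Fin d, Function.Injective f ∧ ∀ i c, f i = Sum.inl c → c ∈ t i := by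
  have hall : ∀ K : Finset ι, #K ≤ #(K.biUnion fun i => (t i).disjSum (univ : Finset (Fin d))) := by
    intro K
    rcases K.eq_empty_or_nonempty with rfl | ⟨i₀, hi₀⟩
    · simp
    calc #K ≤ #(K.biUnion t) + d := h K
      _ = #((K.biUnion t).disjSum (univ : Finset (Fin d))) := by
        rw [card_disjSum, card_univ, Fintype.card_fin]
      _ ≤ _ := card_le_card fun x hx => ?_
    simp only [mem_biUnion]
    rcases x with c | c
    · obtain ⟨i, hi, hc⟩ := mem_biUnion.1 (inl_mem_disjSum.1 hx)
      exact ⟨i, hi, inl_mem_disjSum.2 hc⟩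
    · exact ⟨i₀, hi₀, inr_mem_disjSum.2 (mem_univ c)⟩
  obtain ⟨f, hf, hft⟩ := (all_card_le_biUnion_card_iff_exists_injective _).1 hall
  exact ⟨f, hf, fun i c hc => inl_mem_disjSum.1 (hc ▸ hft i)⟩

theorem Function.Injective.sum_comp_le_sum {β X : Type*} [Fintype β] [Fintype X] {f : β → X}
    (hf : Function.Injective f) (g : X → ℕ) : ∑ j, g (f j) ≤ ∑ x, g x := by
  simpa using sum_le_sum_of_subset (f := g) (subset_univ (univ.map ⟨f, hf⟩))

section Assignment

variable {α β D : Type*} [Fintype α] [Fintype β] [Fintype D] [DecidableEq α] {s : ℕ}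
  {f : β → (α × Fin s) ⊕ D}

/-- Column `j` is matched to row `i` when `f` sends it to one of the `s` copies of `i`. -/
def assignmentMatrix (f : β → (α × Fin s) ⊕ D) : Matrix α β ℕ :=
  Matrix.of fun i j => Sum.elim (fun p => if p.1 = i then 1 else 0) 0 (f j)

omit [Fintype β] [Fintype D] in
theorem sum_assignmentMatrix_col (f : β → (α × Fin s) ⊕ D) (j : β) :
    ∑ i, assignmentMatrix f i j = if (f j).isLeft then 1 else 0 := by
  rcases hfj : f j with ⟨i₀, c₀⟩ | e <;> simp [assignmentMatrix, hfj]

theorem isTermMatching_assignmentMatrix {A : Matrix α β ℕ} (hf : Function.Injective f)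
    (hA : ∀ i j c, f j = Sum.inl (i, c) → A i j ≠ 0) : IsTermMatching s A (assignmentMatrix f) := by
  refine ⟨fun i j => ?_, fun i => ?_, fun j => ?_⟩
  · rcases hfj : f j with ⟨i₀, c⟩ | e
    · have := hA i₀ j c hfj
      by_cases h : i₀ = i <;> simp [assignmentMatrix, hfj, h] at this ⊢
      omega
    · simp [assignmentMatrix, hfj]
  · calc ∑ j, assignmentMatrix f i j
        ≤ ∑ x, Sum.elim (fun p : α × Fin s => if p.1 = i then 1 else 0) 0 x :=
          hf.sum_comp_le_sum _
      _ = s := by rw [Fintype.sum_sum_type, Fintype.sum_prod_type, sum_comm]; simp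
  · rw [sum_assignmentMatrix_col]
    split_ifs <;> simp

theorem card_le_sum_assignmentMatrix_add (hf : Function.Injective f) :
    Fintype.card β ≤ ∑ i, ∑ j, assignmentMatrix f i j + Fintype.card D := by
  have hright : ∑ j, (if (f j).isLeft then 0 else 1) ≤ Fintype.card D :=
    calc _ ≤ ∑ x : (α × Fin s) ⊕ D, (if x.isLeft then 0 else 1) := hf.sum_comp_le_sum _
      _ = Fintype.card D := by simp
  rw [sum_comm (f := fun i j => assignmentMatrix f i j)]
  simp only [sum_assignmentMatrix_col]
  calc Fintype.card β = ∑ j, ((if (f j).isLeft then 1 else 0) + if (f j).isLeft then 0 else 1) := by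
        rw [sum_const_nat (m := 1) fun j _ => by split_ifs <;> rfl, card_univ, mul_one]
    _ ≤ _ := by rw [sum_add_distrib]; omega

end Assignment

section Konig

variable {α β : Type*} [Fintype α] [Fintype β]

def rowsMeeting [DecidableEq α] (A : Matrix α β ℕ) (K : Finset β) : Finset α :=
  K.biUnion fun j => {i | A i j ≠ 0}

theorem isLineCover_rowsMeeting_compl [DecidableEq α] [DecidableEq β] (A : Matrix α β ℕ)
    (K : Finset β) : IsLineCover A (rowsMeeting A K) Kᶜ := by
  intro i j hij
  by_cases hj : j ∈ K
  · exact Or.inl (mem_biUnion.2 ⟨j, hj, mem_filter.2 ⟨mem_univ i, hij⟩⟩)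
  · exact Or.inr (mem_compl.2 hj)

theorem exists_isTermMatching_of_card_le [DecidableEq α] (s d : ℕ) (A : Matrix α β ℕ)
    (h : ∀ K : Finset β, #K ≤ s * #(rowsMeeting A K) + d) :
    ∃ B, IsTermMatching s A B ∧ Fintype.card β ≤ ∑ i, ∑ j, B i j + d := by
  let T : β → Finset (α × Fin s) := fun j => {p | A p.1 j ≠ 0}
  have hT : ∀ K : Finset β, K.biUnion T = rowsMeeting A K ×ˢ univ := by
    intro K; ext ⟨i, c⟩; simp [T, rowsMeeting]
  obtain ⟨f, hf, hfT⟩ := exists_injective_sum_of_card_le_card_biUnion_add T d fun K => by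
    rw [hT, card_product, card_univ, Fintype.card_fin, mul_comm]
    exact h K
  refine ⟨assignmentMatrix f, isTermMatching_assignmentMatrix hf fun i j c hc => ?_, ?_⟩
  · simpa [T] using hfT j (i, c) hc
  · simpa using card_le_sum_assignmentMatrix_add hf

theorem exists_isLineCover_le_tTermRank (s : ℕ) (A : Matrix α β ℕ) :
    ∃ R C, IsLineCover A R C ∧ s * #R + #C ≤ tTermRank s A := by
  classical
  let cost : Finset β → ℕ := fun K => s * #(rowsMeeting A K) + #Kᶜ
  obtain ⟨J, -, hJ⟩ := exists_min_image univ cost univ_nonempty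
  -- minimality of `J` is Hall's condition with deficiency `card β - cost J`
  have hJn : cost J ≤ Fintype.card β := by simpa [cost, rowsMeeting] using hJ ∅ (mem_univ _)
  obtain ⟨B, hB, hcard⟩ := exists_isTermMatching_of_card_le s (Fintype.card β - cost J) A
    fun K => by
      have : cost J ≤ s * #(rowsMeeting A K) + #Kᶜ := hJ K (mem_univ K)
      have := card_add_card_compl K
      omega
  refine ⟨rowsMeeting A J, Jᶜ, isLineCover_rowsMeeting_compl A J, ?_⟩
  change cost J ≤ _
  have := le_tTermRank hB
  omega

end Konig

theorem Finset.mul_card_inter_add_mul_card_union_le {α : Type*} [DecidableEq α] {s t : ℕ}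
    (hst : s ≤ t) (R R' : Finset α) : t * #(R ∩ R') + s * #(R ∪ R') ≤ t * #R + s * #R' := by
  have h₁ := card_inter_add_card_union R R'
  have h₂ := card_le_card (inter_subset_left (s₁ := R) (s₂ := R'))
  nlinarith

section SupportSwap

variable {α β : Type*}

/-- The `t`-term rank only sees the support, and an interchange moves the support of `A` at
`(i₁, j₁), (i₂, j₂)` to `(i₁, j₂), (i₂, j₁)`. -/
structure IsSupportSwap (A A' : Matrix α β ℕ) (i₁ i₂ : α) (j₁ j₂ : β) : Prop where
  left_ne_zero₁ : A i₁ j₁ ≠ 0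
  left_ne_zero₂ : A i₂ j₂ ≠ 0
  right_ne_zero₁ : A' i₁ j₂ ≠ 0
  right_ne_zero₂ : A' i₂ j₁ ≠ 0
  left_support : ∀ i j, A i j ≠ 0 → A' i j ≠ 0 ∨ (i = i₁ ∧ j = j₁) ∨ (i = i₂ ∧ j = j₂)
  right_support : ∀ i j, A' i j ≠ 0 → A i j ≠ 0 ∨ (i = i₁ ∧ j = j₂) ∨ (i = i₂ ∧ j = j₁)

theorem Interchange.exists_isSupportSwap {m n : ℕ} {A A' : Matrix (Fin m) (Fin n) ℕ}
    (h : Interchange A A') : ∃ i₁ i₂ j₁ j₂, IsSupportSwap A A' i₁ i₂ j₁ j₂ := by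
  obtain ⟨i₁, i₂, j₁, j₂, -, -, hA, h₁₁, h₁₂, h₂₁, h₂₂, hoff⟩ := h
  refine hA.elim (fun hA => ⟨i₁, i₂, j₁, j₂, ?_⟩) (fun hA => ⟨i₁, i₂, j₂, j₁, ?_⟩)
  all_goals
    refine ⟨by omega, by omega, by omega, by omega, fun i j hij => ?_, fun i j hij => ?_⟩
    all_goals
      by_cases hb : (i = i₁ ∨ i = i₂) ∧ (j = j₁ ∨ j = j₂)
      · rcases hb with ⟨rfl | rfl, rfl | rfl⟩ <;> simp_all
      · exact Or.inl (by simpa [hoff i j hb] using hij)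

namespace IsSupportSwap

variable {A A' : Matrix α β ℕ} {i₁ i₂ : α} {j₁ j₂ : β}

theorem symm (h : IsSupportSwap A A' i₁ i₂ j₁ j₂) : IsSupportSwap A' A i₁ i₂ j₂ j₁ :=
  ⟨h.right_ne_zero₁, h.right_ne_zero₂, h.left_ne_zero₁, h.left_ne_zero₂, h.right_support,
    h.left_support⟩

theorem isLineCover {R : Finset α} {C : Finset β} (h : IsSupportSwap A A' i₁ i₂ j₁ j₂)
    (hc : ∀ i j, A i j ≠ 0 → A' i j ≠ 0 → i ∈ R ∨ j ∈ C) (h₁ : i₁ ∈ R ∨ j₁ ∈ C)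
    (h₂ : i₂ ∈ R ∨ j₂ ∈ C) : IsLineCover A R C := by
  intro i j hij
  rcases h.left_support i j hij with hij' | ⟨rfl, rfl⟩ | ⟨rfl, rfl⟩
  exacts [hc i j hij hij', h₁, h₂]

theorem tTermRank_le_add_one [Fintype α] [Fintype β] (h : IsSupportSwap A A' i₁ i₂ j₁ j₂)
    (t : ℕ) : tTermRank t A' ≤ tTermRank t A + 1 := by
  classical
  obtain ⟨R, C, hc, hcost⟩ := exists_isLineCover_le_tTermRank t A
  obtain ⟨j, h₁, h₂⟩ : ∃ j, (i₁ ∈ R ∨ j₂ ∈ insert j C) ∧ (i₂ ∈ R ∨ j₁ ∈ insert j C) := by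
    rcases hc i₁ j₁ h.left_ne_zero₁ with hi | hj
    · exact ⟨j₁, Or.inl hi, by simp⟩
    · exact ⟨j₂, by simp, by simp [hj]⟩
  have hc' := h.symm.isLineCover (fun i j _ hij => (hc i j hij).imp_right (mem_insert_of_mem)) h₁ h₂
  have := tTermRank_le_of_isLineCover (t := t) hc'
  have := card_insert_le j C
  omega

theorem mem_of_not_isLineCover {R : Finset α} {C : Finset β} (h : IsSupportSwap A A' i₁ i₂ j₁ j₂)
    (hc : IsLineCover A' R C) (hnc : ¬IsLineCover A R C) :
    (i₁ ∉ R ∧ j₁ ∉ C ∧ i₂ ∈ R ∧ j₂ ∈ C) ∨ (i₂ ∉ R ∧ j₂ ∉ C ∧ i₁ ∈ R ∧ j₁ ∈ C) := by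
  have h₁ := hc _ _ h.right_ne_zero₁
  have h₂ := hc _ _ h.right_ne_zero₂
  have : ¬((i₁ ∈ R ∨ j₁ ∈ C) ∧ (i₂ ∈ R ∨ j₂ ∈ C)) := fun ⟨hp, hq⟩ =>
    hnc (h.isLineCover (fun i j _ hij => hc i j hij) hp hq)
  tauto

theorem isLineCover_inter [DecidableEq α] [DecidableEq β] {R R' : Finset α} {C C' X : Finset β}
    (h : IsSupportSwap A A' i₁ i₂ j₁ j₂) (hc : IsLineCover A' R C) (hc' : IsLineCover A R' C')
    (hX : C ∪ C' ⊆ X) (h₁ : i₁ ∈ R ∩ R' ∨ j₁ ∈ X) (h₂ : i₂ ∈ R ∩ R' ∨ j₂ ∈ X) :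
    IsLineCover A (R ∩ R') X := by
  refine h.isLineCover (fun i j hij hij' => ?_) h₁ h₂
  have := hc i j hij'
  have := hc' i j hij
  have := @hX j
  simp only [mem_inter, mem_union] at *
  tauto

theorem isLineCover_union [DecidableEq α] [DecidableEq β] {R R' : Finset α} {C C' X : Finset β}
    (h : IsSupportSwap A A' i₁ i₂ j₁ j₂) (hc : IsLineCover A' R C) (hc' : IsLineCover A R' C')
    (hX : C ∩ C' ⊆ X) (h₁ : i₁ ∈ R ∪ R' ∨ j₂ ∈ X) (h₂ : i₂ ∈ R ∪ R' ∨ j₁ ∈ X) :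
    IsLineCover A' (R ∪ R') X := by
  refine h.symm.isLineCover (fun i j hij' hij => ?_) h₁ h₂
  have := hc i j hij'
  have := hc' i j hij
  have := @hX j
  simp only [mem_inter, mem_union] at *
  tauto

theorem exists_isLineCover_inter_union [DecidableEq α] [DecidableEq β]
    {R R' : Finset α} {C C' : Finset β} (h : IsSupportSwap A A' i₁ i₂ j₁ j₂)
    (hc : IsLineCover A' R C) (hc' : IsLineCover A R' C')
    (hnc : ¬IsLineCover A R C) (hnc' : ¬IsLineCover A' R' C') :
    ∃ C₁ C₂, IsLineCover A (R ∩ R') C₁ ∧ IsLineCover A' (R ∪ R') C₂ ∧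
      #C₁ + #C₂ ≤ #C + #C' + 1 := by
  have := card_union_add_card_inter C C'
  have := card_insert_le j₁ (C ∪ C')
  have := card_insert_le j₂ (C ∪ C')
  have := card_insert_le j₁ (C ∩ C')
  have := card_insert_le j₂ (C ∩ C')
  rcases h.mem_of_not_isLineCover hc hnc with hRC | hRC <;>
    rcases h.symm.mem_of_not_isLineCover hc' hnc' with hRC' | hRC'
  · refine ⟨C ∪ C', insert j₂ (C ∩ C'), h.isLineCover_inter hc hc' subset_rfl ?_ ?_,
      h.isLineCover_union hc hc' (subset_insert _ _) ?_ ?_, by omega⟩ <;>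
      simp [hRC, hRC']
  · refine ⟨insert j₁ (C ∪ C'), C ∩ C', h.isLineCover_inter hc hc' (subset_insert _ _) ?_ ?_,
      h.isLineCover_union hc hc' subset_rfl ?_ ?_, by omega⟩ <;>
      simp [hRC, hRC']
  · refine ⟨insert j₂ (C ∪ C'), C ∩ C', h.isLineCover_inter hc hc' (subset_insert _ _) ?_ ?_,
      h.isLineCover_union hc hc' subset_rfl ?_ ?_, by omega⟩ <;>
      simp [hRC, hRC']
  · refine ⟨C ∪ C', insert j₁ (C ∩ C'), h.isLineCover_inter hc hc' subset_rfl ?_ ?_,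
      h.isLineCover_union hc hc' (subset_insert _ _) ?_ ?_, by omega⟩ <;>
      simp [hRC, hRC']

theorem tTermRank_succ_le [Fintype α] [Fintype β] (h : IsSupportSwap A A' i₁ i₂ j₁ j₂) {s : ℕ}
    (hinc : tTermRank s A' = tTermRank s A + 1) : tTermRank (s + 1) A ≤ tTermRank (s + 1) A' := by
  classical
  by_contra! hlt
  obtain ⟨R, C, hc, hcost⟩ := exists_isLineCover_le_tTermRank (s + 1) A'
  obtain ⟨R', C', hc', hcost'⟩ := exists_isLineCover_le_tTermRank s A
  have hnc : ¬IsLineCover A R C := fun hcA => by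
    have := tTermRank_le_of_isLineCover (t := s + 1) hcA; omega
  have hnc' : ¬IsLineCover A' R' C' := fun hcA' => by
    have := tTermRank_le_of_isLineCover (t := s) hcA'; omega
  obtain ⟨C₁, C₂, hC₁, hC₂, hcard⟩ := h.exists_isLineCover_inter_union hc hc' hnc hnc'
  have h₁ := tTermRank_le_of_isLineCover (t := s + 1) hC₁
  have h₂ := tTermRank_le_of_isLineCover (t := s) hC₂
  have hrows := mul_card_inter_add_mul_card_union_le (Nat.le_add_right s 1) R R'
  omega

end IsSupportSwap

end SupportSwap

theorem t_term_rank_interchange_increase_general (m n t : ℕ) (ht : 2 ≤ t)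
    (A A' : Matrix (Fin m) (Fin n) ℕ)
    (h : Interchange A A')
    (hinc : tTermRank (t - 1) A' = tTermRank (t - 1) A + 1) :
    tTermRank t A ≤ tTermRank t A' ∧ tTermRank t A' ≤ tTermRank t A + 1 := by
  obtain ⟨i₁, i₂, j₁, j₂, hswap⟩ := h.exists_isSupportSwap
  obtain ⟨s, rfl⟩ : ∃ s, t = s + 1 := ⟨t - 1, by omega⟩
  rw [Nat.add_sub_cancel] at hinc
  exact ⟨hswap.tTermRank_succ_le hinc, hswap.tTermRank_le_add_one _⟩

/-- For `t ≥ 2`, a single interchange which increases the `(t−1)`-term rank cannot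
decrease the `t`-term rank (and can increase it by at most 1). -/
theorem t_term_rank_interchange_increase (m n t : ℕ) (ht : 2 ≤ t)
    (A A' : Matrix (Fin m) (Fin n) ℕ) (hA : ∀ i j, A i j ≤ 1)
    (h : Interchange A A')
    (hinc : tTermRank (t - 1) A' = tTermRank (t - 1) A + 1) :
    tTermRank t A ≤ tTermRank t A' ∧ tTermRank t A' ≤ tTermRank t A + 1 :=
  t_term_rank_interchange_increase_general m n t ht A A' h hinc
end
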